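/- Let α < -1/2 and c_n = 2^{n/2} (2/(n! π)) Γ((n+1)/2). Then the series ∑_{m≥0} (1+m)^α m! c_m^2 converges. -/
import Mathlib


open Real

/-- The constant `c_n = 2^{n/2} (2/(n! π)) Γ((n+1)/2)`. -/
noncomputable def cConst (n : ℕ) : ℝ :=
  (2 : ℝ) ^ ((n : ℝ) / 2) * (2 / (n.factorial * π)) * Real.Gamma ((n + 1) / 2)

/-- Gautschi-type bound via log-convexity of Γ. -/
lemma gamma_ratio_le (m : ℕ) :
    Real.Gamma (((m : ℝ) + 1) / 2) ≤ 2 / Real.sqrt (1 + m) * Real.Gamma ((m : ℝ) / 2 + 1) := by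
  set x : ℝ := (m : ℝ)
  have hx : 0 ≤ x := Nat.cast_nonneg m
  rcases Nat.eq_zero_or_pos m with hm | hm
  · subst hm
    simp only [x, Nat.cast_zero, zero_add, zero_div]
    rw [Real.Gamma_one_half_eq, Real.Gamma_one]
    have h4 : Real.sqrt π ≤ Real.sqrt 4 := Real.sqrt_le_sqrt (by nlinarith [Real.pi_le_four])
    have h4' : Real.sqrt 4 = 2 := by
      rw [show (4:ℝ) = 2^2 by norm_num, Real.sqrt_sq (by norm_num)]
    rw [show (1:ℝ)+0 = 1 by norm_num, Real.sqrt_one]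
    calc Real.sqrt π ≤ 2 := h4' ▸ h4
      _ = 2 / 1 * 1 := by ring
  · have hm1 : (1 : ℝ) ≤ x := Nat.one_le_cast.2 hm
    have hxpos : 0 < x := by linarith
    have ha : (0 : ℝ) < x / 2 := by linarith
    have hb : (0 : ℝ) < x / 2 + 1 := by linarith
    have hmid : (0 : ℝ) < (x + 1) / 2 := by linarith
    -- log-convexity
    have hc := Real.convexOn_log_Gamma.2 (Set.mem_Ioi.2 ha) (Set.mem_Ioi.2 hb)
      (by norm_num : (0:ℝ) ≤ (1:ℝ)/2) (by norm_num : (0:ℝ) ≤ (1:ℝ)/2) (by norm_num)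
    simp only [Function.comp_apply, smul_eq_mul] at hc
    rw [show (1:ℝ)/2 * (x/2) + (1:ℝ)/2 * (x/2 + 1) = (x + 1) / 2 by ring] at hc
    have hA := Real.Gamma_pos_of_pos hmid
    have hB := Real.Gamma_pos_of_pos hb
    have hA' := Real.Gamma_pos_of_pos ha
    have hsq : Real.Gamma ((x + 1) / 2) ^ 2 ≤ Real.Gamma (x/2) * Real.Gamma (x/2 + 1) := by
      have h2 : 2 * Real.log (Real.Gamma ((x+1)/2)) ≤
          Real.log (Real.Gamma (x/2)) + Real.log (Real.Gamma (x/2+1)) := by linarith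
      have := Real.exp_le_exp.2 h2
      rwa [Real.exp_add, Real.exp_log hA', Real.exp_log hB,
        show (2:ℝ) * Real.log (Real.Gamma ((x+1)/2)) = Real.log (Real.Gamma ((x+1)/2))
          + Real.log (Real.Gamma ((x+1)/2)) by ring,
        Real.exp_add, Real.exp_log hA, ← sq] at this
    -- Γ(x/2+1) = (x/2) Γ(x/2)
    have hrec : Real.Gamma (x/2 + 1) = (x/2) * Real.Gamma (x/2) :=
      Real.Gamma_add_one ha.ne'
    have hsq2 : Real.Gamma ((x + 1) / 2) ^ 2 ≤ (2/x) * Real.Gamma (x/2+1) ^ 2 := by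
      have : Real.Gamma (x/2) = Real.Gamma (x/2+1) / (x/2) := by
        rw [hrec, mul_div_cancel_left₀ _ (by positivity : (x/2:ℝ) ≠ 0)]
      rw [this] at hsq
      calc Real.Gamma ((x + 1) / 2) ^ 2 ≤ Real.Gamma (x/2+1) / (x/2) * Real.Gamma (x/2+1) := hsq
        _ = (2/x) * Real.Gamma (x/2+1) ^ 2 := by field_simp
    -- 2/x ≤ 4/(1+x)
    have hsq3 : Real.Gamma ((x + 1) / 2) ^ 2 ≤ (2 / Real.sqrt (1 + x) * Real.Gamma (x/2+1)) ^ 2 := by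
      have hs : Real.sqrt (1+x) ^ 2 = 1 + x := Real.sq_sqrt (by linarith)
      have hspos : 0 < Real.sqrt (1+x) := Real.sqrt_pos.2 (by linarith)
      have : (2/x) ≤ 4 / (1+x) := by
        rw [div_le_div_iff₀ hxpos (by linarith)]; nlinarith
      calc Real.Gamma ((x + 1) / 2) ^ 2 ≤ (2/x) * Real.Gamma (x/2+1) ^ 2 := hsq2
        _ ≤ 4 / (1+x) * Real.Gamma (x/2+1) ^ 2 := by nlinarith [sq_nonneg (Real.Gamma (x/2+1))]
        _ = (2 / Real.sqrt (1 + x) * Real.Gamma (x/2+1)) ^ 2 := by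
            rw [mul_pow, div_pow, hs]; norm_num
    have hrhs : 0 ≤ 2 / Real.sqrt (1 + x) * Real.Gamma (x/2+1) := by positivity
    nlinarith [hsq3, hA.le, hrhs]

lemma cConst_formula (m : ℕ) :
    (m.factorial : ℝ) * cConst m ^ 2 * Real.Gamma ((m : ℝ) / 2 + 1)
      = 4 * Real.sqrt π / π ^ 2 * Real.Gamma (((m : ℝ) + 1) / 2) := by
  have hx : (0:ℝ) ≤ (m:ℝ) := Nat.cast_nonneg m
  have hfac : (0:ℝ) < (m.factorial : ℝ) := by exact_mod_cast m.factorial_pos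
  have h2pos : (0:ℝ) < (2:ℝ) ^ ((m:ℝ)) := Real.rpow_pos_of_pos two_pos _
  have hdup : Real.Gamma (((m:ℝ)+1)/2) * Real.Gamma ((m:ℝ)/2+1)
      = (m.factorial : ℝ) * ((2:ℝ)^((m:ℝ)))⁻¹ * Real.sqrt π := by
    have h := Real.Gamma_mul_Gamma_add_half_of_pos
      (show (0:ℝ) < ((m:ℝ)+1)/2 by linarith)
    rw [show ((m:ℝ)+1)/2 + 1/2 = (m:ℝ)/2+1 by ring,
      show (2:ℝ)*(((m:ℝ)+1)/2) = (m:ℝ)+1 by ring,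
      Real.Gamma_nat_eq_factorial,
      show (1:ℝ) - ((m:ℝ)+1) = -(m:ℝ) by ring,
      Real.rpow_neg (by norm_num : (0:ℝ) ≤ 2)] at h
    exact h
  have h2 : ((2:ℝ) ^ ((m:ℝ)/2)) ^ 2 = (2:ℝ) ^ ((m:ℝ)) := by
    rw [← Real.rpow_natCast ((2:ℝ) ^ ((m:ℝ)/2)) 2, ← Real.rpow_mul (by norm_num)]
    norm_num
  unfold cConst
  rw [mul_pow, mul_pow, h2]
  have hexp : (m.factorial : ℝ) * ((2:ℝ)^((m:ℝ)) * (2 / ((m.factorial : ℝ) * π))^2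
        * Real.Gamma (((m:ℝ)+1)/2) ^ 2) * Real.Gamma ((m:ℝ)/2+1)
      = (2:ℝ)^((m:ℝ)) * (2 / ((m.factorial : ℝ) * π))^2 * (m.factorial : ℝ)
        * Real.Gamma (((m:ℝ)+1)/2)
        * (Real.Gamma (((m:ℝ)+1)/2) * Real.Gamma ((m:ℝ)/2+1)) := by ring
  rw [hexp, hdup]
  field_simp
  ring

lemma term_le (α : ℝ) (m : ℕ) :
    (1 + (m : ℝ)) ^ α * (m.factorial : ℝ) * (cConst m) ^ 2
      ≤ 8 * Real.sqrt π / π ^ 2 * (1 + (m : ℝ)) ^ (α - 1/2) := by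
  have hx : (0:ℝ) ≤ (m:ℝ) := Nat.cast_nonneg m
  have h1x : (0:ℝ) < 1 + (m:ℝ) := by linarith
  have hB := Real.Gamma_pos_of_pos (show (0:ℝ) < (m:ℝ)/2+1 by linarith)
  have hA := Real.Gamma_pos_of_pos (show (0:ℝ) < ((m:ℝ)+1)/2 by linarith)
  have hform : (m.factorial : ℝ) * cConst m ^ 2
      = 4 * Real.sqrt π / π ^ 2 * (Real.Gamma (((m:ℝ)+1)/2) / Real.Gamma ((m:ℝ)/2+1)) := by
    have := cConst_formula m
    field_simp at this ⊢
    linarith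
  have hrat : Real.Gamma (((m:ℝ)+1)/2) / Real.Gamma ((m:ℝ)/2+1) ≤ 2 / Real.sqrt (1 + m) := by
    have hs : (0:ℝ) < Real.sqrt (1 + m) := Real.sqrt_pos.2 h1x
    rw [div_le_div_iff₀ hB hs]
    calc Real.Gamma (((m:ℝ)+1)/2) * Real.sqrt (1 + m)
        ≤ (2 / Real.sqrt (1 + m) * Real.Gamma ((m:ℝ)/2+1)) * Real.sqrt (1 + m) :=
          mul_le_mul_of_nonneg_right (gamma_ratio_le m) hs.le
      _ = 2 * Real.Gamma ((m:ℝ)/2+1) := by field_simp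
  have hpos : (0:ℝ) < 4 * Real.sqrt π / π ^ 2 := by positivity
  have hrp : (0:ℝ) < (1 + (m:ℝ)) ^ α := Real.rpow_pos_of_pos h1x α
  calc (1 + (m : ℝ)) ^ α * (m.factorial : ℝ) * (cConst m) ^ 2
      = (1 + (m:ℝ)) ^ α * ((m.factorial : ℝ) * cConst m ^ 2) := by ring
    _ = (1 + (m:ℝ)) ^ α * (4 * Real.sqrt π / π ^ 2
          * (Real.Gamma (((m:ℝ)+1)/2) / Real.Gamma ((m:ℝ)/2+1))) := by rw [hform]
    _ ≤ (1 + (m:ℝ)) ^ α * (4 * Real.sqrt π / π ^ 2 * (2 / Real.sqrt (1 + m))) := by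
        apply mul_le_mul_of_nonneg_left _ hrp.le
        exact mul_le_mul_of_nonneg_left hrat hpos.le
    _ = 8 * Real.sqrt π / π ^ 2 * ((1 + (m:ℝ)) ^ α / (1 + (m:ℝ)) ^ ((1:ℝ)/2)) := by
        rw [Real.sqrt_eq_rpow (1+(m:ℝ))]; ring
    _ = 8 * Real.sqrt π / π ^ 2 * (1 + (m : ℝ)) ^ (α - 1/2) := by
        rw [← Real.rpow_sub h1x]

theorem stmt3 (α : ℝ) (hα : α < -1/2) :
    Summable (fun m : ℕ => (1 + (m : ℝ)) ^ α * (m.factorial : ℝ) * (cConst m) ^ 2) := by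
  have hsum : Summable (fun m : ℕ => 8 * Real.sqrt π / π ^ 2 * (1 + (m:ℝ)) ^ (α - 1/2)) := by
    apply Summable.mul_left
    have h1 : Summable (fun n : ℕ => (n:ℝ) ^ (α - 1/2)) :=
      Real.summable_nat_rpow.2 (by linarith)
    have h2 := (summable_nat_add_iff 1).2 h1
    refine h2.congr fun n => ?_
    push_cast
    ring_nf
  refine Summable.of_nonneg_of_le (fun m => ?_) (fun m => term_le α m) hsum
  have h1x : (0:ℝ) < 1 + (m:ℝ) := by positivity
  have := Real.rpow_nonneg h1x.le α
  positivity
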